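/- arXiv:2205.13903 — 7 statements merged into one kernel-verified Lean document; each statement's English description precedes it below -/
import Mathlib

section
/- Let (A, ≺) be a proto-subordination algebra satisfying (WO): b ≺ x ≤ y implies b ≺ y, and (DD): a ≺ x₁ and a ≺ x₂ imply there exists x with a ≺ x, x ≤ x₁, x ≤ x₂. Then for all a, b ∈ A, Diamond a ≤ b if and only if a ≺ b, where Diamond a := ⋀ ≺[a] in the canonical extension A^δ. -/
theorem exists_le_of_sInf_image_le {A D : Type*} [Preorder A] [CompleteLattice D] (e : A → D)
    (compact : ∀ F I : Set A, DirectedOn (· ≥ ·) F → DirectedOn (· ≤ ·) I →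
      sInf (e '' F) ≤ sSup (e '' I) → ∃ a ∈ F, ∃ b ∈ I, a ≤ b)
    {F : Set A} (hF : DirectedOn (· ≥ ·) F) {b : A} (h : sInf (e '' F) ≤ e b) :
    ∃ a ∈ F, a ≤ b := by
  have hle : sInf (e '' F) ≤ sSup (e '' {b}) := by
    rwa [Set.image_singleton, sSup_singleton]
  obtain ⟨x, hx, y, rfl, hxy⟩ := compact F {b} hF (directedOn_singleton b) hle
  exact ⟨x, hx, hxy⟩

theorem stmt_1_general {A D : Type*} [PartialOrder A] [CompleteLattice D]
    (e : A → D)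
    (compact : ∀ F I : Set A, DirectedOn (· ≥ ·) F → DirectedOn (· ≤ ·) I →
      sInf (e '' F) ≤ sSup (e '' I) → ∃ a ∈ F, ∃ b ∈ I, a ≤ b)
    (r : A → A → Prop)
    (WO : ∀ b x y : A, r b x → x ≤ y → r b y)
    (DD : ∀ a x₁ x₂ : A, r a x₁ → r a x₂ → ∃ x, r a x ∧ x ≤ x₁ ∧ x ≤ x₂) :
    ∀ a b : A, sInf (e '' {x | r a x}) ≤ e b ↔ r a b := by
  intro a b
  refine ⟨fun h => ?_, fun h => sInf_le ⟨b, h, rfl⟩⟩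
  have hdirected : DirectedOn (· ≥ ·) {x | r a x} := fun x₁ h₁ x₂ h₂ => DD a x₁ x₂ h₁ h₂
  obtain ⟨x, hax, hxb⟩ := exists_le_of_sInf_image_le e compact hdirected h
  exact WO a x b hax hxb

/-- Under (WO) and (DD), `Diamond a ≤ e b` iff `a ≺ b`. -/
theorem stmt_1 {A D : Type*} [PartialOrder A] [CompleteLattice D]
    (e : A → D) (he : ∀ a b : A, e a ≤ e b ↔ a ≤ b)
    (compact : ∀ F I : Set A, DirectedOn (· ≥ ·) F → DirectedOn (· ≤ ·) I →
      sInf (e '' F) ≤ sSup (e '' I) → ∃ a ∈ F, ∃ b ∈ I, a ≤ b)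
    (r : A → A → Prop)
    (WO : ∀ b x y : A, r b x → x ≤ y → r b y)
    (DD : ∀ a x₁ x₂ : A, r a x₁ → r a x₂ → ∃ x, r a x ∧ x ≤ x₁ ∧ x ≤ x₂) :
    ∀ a b : A, sInf (e '' {x | r a x}) ≤ e b ↔ r a b :=
  stmt_1_general e compact r WO DD
end

section
/- Let (A, ≺) be a proto-subordination algebra satisfying (SI): a ≤ b ≺ x implies a ≺ x, and (UD): a₁ ≺ x and a₂ ≺ x imply there exists a with a ≺ x, a₁ ≤ a, a₂ ≤ a. Then for all a, b ∈ A, a ≤ Box b iff a ≺ b, where Box b := ⋁ ≺⁻¹[b] in the canonical extension A^δ. -/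
lemma directedOn_setOf_rel_of_upDirected {A : Type*} [Preorder A] {r : A → A → Prop}
    (UD : ∀ a₁ a₂ x : A, r a₁ x → r a₂ x → ∃ a, r a x ∧ a₁ ≤ a ∧ a₂ ≤ a) (b : A) :
    DirectedOn (· ≤ ·) {x | r x b} :=
  fun x hx y hy => UD x y b hx hy

lemma exists_le_mem_of_le_sSup_image {A D : Type*} [Preorder A] [CompleteLattice D]
    {e : A → D}
    (compact : ∀ F I : Set A, DirectedOn (· ≥ ·) F → DirectedOn (· ≤ ·) I →
      sInf (e '' F) ≤ sSup (e '' I) → ∃ a ∈ F, ∃ b ∈ I, a ≤ b)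
    {a : A} {I : Set A} (hI : DirectedOn (· ≤ ·) I) (h : e a ≤ sSup (e '' I)) :
    ∃ c ∈ I, a ≤ c := by
  obtain ⟨a', rfl, c, hc, hac⟩ :=
    compact {a} I (directedOn_singleton a) hI (by simpa using h)
  exact ⟨c, hc, hac⟩

theorem stmt_2_general {A D : Type*} [PartialOrder A] [CompleteLattice D]
    (e : A → D)
    (compact : ∀ F I : Set A, DirectedOn (· ≥ ·) F → DirectedOn (· ≤ ·) I →
      sInf (e '' F) ≤ sSup (e '' I) → ∃ a ∈ F, ∃ b ∈ I, a ≤ b)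
    (r : A → A → Prop)
    (SI : ∀ a b x : A, a ≤ b → r b x → r a x)
    (UD : ∀ a₁ a₂ x : A, r a₁ x → r a₂ x → ∃ a, r a x ∧ a₁ ≤ a ∧ a₂ ≤ a) :
    ∀ a b : A, e a ≤ sSup (e '' {x | r x b}) ↔ r a b := by
  intro a b
  constructor
  · intro h
    obtain ⟨c, hcb, hac⟩ :=
      exists_le_mem_of_le_sSup_image compact (directedOn_setOf_rel_of_upDirected UD b) h
    exact SI a c b hac hcb
  · intro h
    exact le_sSup ⟨a, h, rfl⟩

/-- Under (SI) and (UD), `e a ≤ Box b` iff `a ≺ b`, where `Box b := ⨆ ≺⁻¹[b]`. -/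
theorem stmt_2 {A D : Type*} [PartialOrder A] [CompleteLattice D]
    (e : A → D) (he : ∀ a b : A, e a ≤ e b ↔ a ≤ b)
    (compact : ∀ F I : Set A, DirectedOn (· ≥ ·) F → DirectedOn (· ≤ ·) I →
      sInf (e '' F) ≤ sSup (e '' I) → ∃ a ∈ F, ∃ b ∈ I, a ≤ b)
    (r : A → A → Prop)
    (SI : ∀ a b x : A, a ≤ b → r b x → r a x)
    (UD : ∀ a₁ a₂ x : A, r a₁ x → r a₂ x → ∃ a, r a x ∧ a₁ ≤ a ∧ a₂ ≤ a) :
    ∀ a b : A, e a ≤ sSup (e '' {x | r x b}) ↔ r a b :=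
  stmt_2_general e compact r SI UD
end

section
/- Let (A, ≺) be a proto-subordination algebra satisfying (SI), (WO), and (DD), where Diamond a := ⋀ ≺[a] in the canonical extension A^δ and Diamond is extended to closed elements by Diamond k := ⋀{Diamond a | a ∈ A, k ≤ a}. Then Diamond a ≤ Diamond(Diamond a) holds for all a ∈ A (with the nested Diamond applied to the closed element Diamond a) if and only if ≺ satisfies (T): a ≺ b and b ≺ c imply a ≺ c. -/
/-
By compactness of the canonical extension, `◇a ≤ b` holds exactly when `a ≺ b`: the closed
element `◇a` is the infimum of the down-directed set `≺[a]` (down-directed by (DD)), so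
`◇a ≤ b` yields some `x` with `a ≺ x ≤ b`, and then `a ≺ b` by (WO). Hence `◇◇a` is the
infimum of `◇b` over `a ≺ b`, and `◇a ≤ ◇◇a` says that `a ≺ b ≺ c` forces `◇a ≤ c`, i.e. `a ≺ c`.
-/

theorem exists_mem_le_of_sInf_image_le {A D : Type*} [PartialOrder A] [CompleteLattice D]
    {e : A → D}
    (compact : ∀ F I : Set A, DirectedOn (· ≥ ·) F → DirectedOn (· ≤ ·) I →
      sInf (e '' F) ≤ sSup (e '' I) → ∃ a ∈ F, ∃ b ∈ I, a ≤ b)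
    {F : Set A} (hF : DirectedOn (· ≥ ·) F) {b : A} (h : sInf (e '' F) ≤ e b) :
    ∃ a ∈ F, a ≤ b := by
  obtain ⟨a, ha, b', rfl, hab⟩ :=
    compact F {b} hF (directedOn_singleton b) (by simpa using h)
  exact ⟨a, ha, hab⟩

theorem directedOn_ge_setOf_rel {A : Type*} [PartialOrder A] {r : A → A → Prop}
    (DD : ∀ a x₁ x₂ : A, r a x₁ → r a x₂ → ∃ x, r a x ∧ x ≤ x₁ ∧ x ≤ x₂) (a : A) :
    DirectedOn (· ≥ ·) {x | r a x} :=
  fun _ hx₁ _ hx₂ => DD a _ _ hx₁ hx₂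

theorem sInf_image_setOf_rel_le_iff {A D : Type*} [PartialOrder A] [CompleteLattice D]
    {e : A → D}
    (compact : ∀ F I : Set A, DirectedOn (· ≥ ·) F → DirectedOn (· ≤ ·) I →
      sInf (e '' F) ≤ sSup (e '' I) → ∃ a ∈ F, ∃ b ∈ I, a ≤ b)
    {r : A → A → Prop}
    (WO : ∀ b x y : A, r b x → x ≤ y → r b y)
    (DD : ∀ a x₁ x₂ : A, r a x₁ → r a x₂ → ∃ x, r a x ∧ x ≤ x₁ ∧ x ≤ x₂) (a b : A) :
    sInf (e '' {x | r a x}) ≤ e b ↔ r a b := by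
  refine ⟨fun h => ?_, fun h => sInf_le ⟨b, h, rfl⟩⟩
  obtain ⟨x, hax, hxb⟩ := exists_mem_le_of_sInf_image_le compact (directedOn_ge_setOf_rel DD a) h
  exact WO a x b hax hxb

theorem stmt_10_general {A D : Type*} [PartialOrder A] [CompleteLattice D]
    (e : A → D)
    (compact : ∀ F I : Set A, DirectedOn (· ≥ ·) F → DirectedOn (· ≤ ·) I →
      sInf (e '' F) ≤ sSup (e '' I) → ∃ a ∈ F, ∃ b ∈ I, a ≤ b)
    (r : A → A → Prop)
    (WO : ∀ b x y : A, r b x → x ≤ y → r b y)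
    (DD : ∀ a x₁ x₂ : A, r a x₁ → r a x₂ → ∃ x, r a x ∧ x ≤ x₁ ∧ x ≤ x₂) :
    (∀ a : A, sInf (e '' {x | r a x}) ≤
        sInf {u : D | ∃ b : A, sInf (e '' {x | r a x}) ≤ e b ∧ u = sInf (e '' {x | r b x})}) ↔
      (∀ a b c : A, r a b → r b c → r a c) := by
  have key := sInf_image_setOf_rel_le_iff compact WO DD
  constructor
  · intro H a b c hab hbc
    have hab' : sInf (e '' {x | r a x}) ≤ sInf (e '' {x | r b x}) :=
      (H a).trans (sInf_le ⟨b, (key a b).2 hab, rfl⟩)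
    exact (key a c).1 (hab'.trans ((key b c).2 hbc))
  · intro T a
    refine le_sInf ?_
    rintro _ ⟨b, hb, rfl⟩
    refine le_sInf ?_
    rintro _ ⟨c, hbc, rfl⟩
    exact (key a c).2 (T a b c ((key a b).1 hb) hbc)

/-- Under (SI), (WO), (DD): `Diamond a ≤ Diamond (Diamond a)` for all `a`
(with the outer `Diamond` applied to the closed element `Diamond a` via
`Diamond k := ⨅ {Diamond b | b ∈ A, k ≤ e b}`) iff (T) holds. -/
theorem stmt_10 {A D : Type*} [PartialOrder A] [CompleteLattice D]
    (e : A → D) (he : ∀ a b : A, e a ≤ e b ↔ a ≤ b)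
    (compact : ∀ F I : Set A, DirectedOn (· ≥ ·) F → DirectedOn (· ≤ ·) I →
      sInf (e '' F) ≤ sSup (e '' I) → ∃ a ∈ F, ∃ b ∈ I, a ≤ b)
    (r : A → A → Prop)
    (SI : ∀ a b x : A, a ≤ b → r b x → r a x)
    (WO : ∀ b x y : A, r b x → x ≤ y → r b y)
    (DD : ∀ a x₁ x₂ : A, r a x₁ → r a x₂ → ∃ x, r a x ∧ x ≤ x₁ ∧ x ≤ x₂) :
    (∀ a : A, sInf (e '' {x | r a x}) ≤
        sInf {u : D | ∃ b : A, sInf (e '' {x | r a x}) ≤ e b ∧ u = sInf (e '' {x | r b x})}) ↔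
      (∀ a b c : A, r a b → r b c → r a c) :=
  stmt_10_general e compact r WO DD
end

section
/- Let (A, ≺) be a proto-subordination algebra satisfying (SI), (WO), and (DD). Then Diamond(Diamond a) ≤ Diamond a holds for all a ∈ A if and only if ≺ satisfies the density condition (D): a ≺ c implies there exists b with a ≺ b and b ≺ c. Here Diamond a := ⋀ ≺[a] in A^δ and Diamond on closed elements k is defined by Diamond k := ⋀{Diamond b | b ∈ A, k ≤ b}. -/
/-!
The inequality `◇◇a ≤ ◇a` is immediate from (D): for `a ≺ c` pick `a ≺ b ≺ c`; then `◇a ≤ b`,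
so `◇◇a ≤ ◇b ≤ c`. Conversely, compactness together with (DD) and (WO) shows that `◇a ≤ b`
holds exactly when `a ≺ b`, so `◇◇a` lies above the meet of the composite relation `(≺ ∘ ≺)[a]`.
By (SI) and (DD) that set is down-directed, so if `◇◇a ≤ ◇a ≤ c` for some `a ≺ c`, compactness
yields `a ≺ b ≺ x ≤ c`, and (WO) gives `b ≺ c`.
-/

namespace ProtoSubordination

variable {A D : Type*} [CompleteLattice D]

def diamond (e : A → D) (r : A → A → Prop) (a : A) : D :=
  sInf (e '' {x | r a x})

/-- The extension of `diamond` to closed elements `k` of `D`. -/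
def diamondClosed (e : A → D) (r : A → A → Prop) (k : D) : D :=
  sInf {u : D | ∃ b : A, k ≤ e b ∧ u = diamond e r b}

variable {e : A → D} {r : A → A → Prop}

theorem diamondClosed_diamond_le_of_dense (hD : ∀ a c : A, r a c → ∃ b, r a b ∧ r b c)
    (a : A) : diamondClosed e r (diamond e r a) ≤ diamond e r a := by
  refine le_sInf ?_
  rintro _ ⟨c, hac, rfl⟩
  obtain ⟨b, hab, hbc⟩ := hD a c hac
  calc diamondClosed e r (diamond e r a)
      ≤ diamond e r b := sInf_le ⟨b, sInf_le ⟨b, hab, rfl⟩, rfl⟩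
    _ ≤ e c := sInf_le ⟨c, hbc, rfl⟩

variable [PartialOrder A]

/-- The compactness of `A` in its canonical extension `D = A^δ`. -/
def IsCompactEmbedding (e : A → D) : Prop :=
  ∀ F I : Set A, DirectedOn (· ≥ ·) F → DirectedOn (· ≤ ·) I →
    sInf (e '' F) ≤ sSup (e '' I) → ∃ a ∈ F, ∃ b ∈ I, a ≤ b

theorem IsCompactEmbedding.exists_le_of_sInf_le (hc : IsCompactEmbedding e)
    {F : Set A} (hF : DirectedOn (· ≥ ·) F) {b : A} (h : sInf (e '' F) ≤ e b) :
    ∃ a ∈ F, a ≤ b := by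
  obtain ⟨a, ha, _, rfl, hab⟩ := hc F {b} hF (directedOn_singleton b)
    (by simpa only [Set.image_singleton, sSup_singleton])
  exact ⟨a, ha, hab⟩

theorem directedOn_ge_setOf_rel
    (DD : ∀ a x₁ x₂ : A, r a x₁ → r a x₂ → ∃ x, r a x ∧ x ≤ x₁ ∧ x ≤ x₂) (a : A) :
    DirectedOn (· ≥ ·) {x | r a x} :=
  fun x₁ h₁ x₂ h₂ => DD a x₁ x₂ h₁ h₂

theorem directedOn_ge_setOf_rel_comp
    (SI : ∀ a b x : A, a ≤ b → r b x → r a x)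
    (DD : ∀ a x₁ x₂ : A, r a x₁ → r a x₂ → ∃ x, r a x ∧ x ≤ x₁ ∧ x ≤ x₂) (a : A) :
    DirectedOn (· ≥ ·) {x | ∃ b, r a b ∧ r b x} := by
  rintro x₁ ⟨b₁, hab₁, hb₁x₁⟩ x₂ ⟨b₂, hab₂, hb₂x₂⟩
  obtain ⟨b, hab, hbb₁, hbb₂⟩ := DD a b₁ b₂ hab₁ hab₂
  obtain ⟨x, hbx, hx₁, hx₂⟩ := DD b x₁ x₂ (SI b b₁ x₁ hbb₁ hb₁x₁) (SI b b₂ x₂ hbb₂ hb₂x₂)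
  exact ⟨x, ⟨b, hab, hbx⟩, hx₁, hx₂⟩

theorem rel_of_diamond_le (hc : IsCompactEmbedding e)
    (WO : ∀ b x y : A, r b x → x ≤ y → r b y)
    (DD : ∀ a x₁ x₂ : A, r a x₁ → r a x₂ → ∃ x, r a x ∧ x ≤ x₁ ∧ x ≤ x₂)
    {a b : A} (h : diamond e r a ≤ e b) : r a b := by
  obtain ⟨x, hax, hxb⟩ := hc.exists_le_of_sInf_le (directedOn_ge_setOf_rel DD a) h
  exact WO a x b hax hxb

theorem sInf_rel_comp_le_diamondClosed_diamond (hc : IsCompactEmbedding e)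
    (WO : ∀ b x y : A, r b x → x ≤ y → r b y)
    (DD : ∀ a x₁ x₂ : A, r a x₁ → r a x₂ → ∃ x, r a x ∧ x ≤ x₁ ∧ x ≤ x₂) (a : A) :
    sInf (e '' {x | ∃ b, r a b ∧ r b x}) ≤ diamondClosed e r (diamond e r a) := by
  refine le_sInf ?_
  rintro _ ⟨b, hab, rfl⟩
  refine le_sInf ?_
  rintro _ ⟨x, hbx, rfl⟩
  exact sInf_le ⟨x, ⟨b, rel_of_diamond_le hc WO DD hab, hbx⟩, rfl⟩

theorem dense_of_diamondClosed_diamond_le (hc : IsCompactEmbedding e)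
    (SI : ∀ a b x : A, a ≤ b → r b x → r a x)
    (WO : ∀ b x y : A, r b x → x ≤ y → r b y)
    (DD : ∀ a x₁ x₂ : A, r a x₁ → r a x₂ → ∃ x, r a x ∧ x ≤ x₁ ∧ x ≤ x₂)
    (h : ∀ a, diamondClosed e r (diamond e r a) ≤ diamond e r a)
    {a c : A} (hac : r a c) : ∃ b, r a b ∧ r b c := by
  have hle : sInf (e '' {x | ∃ b, r a b ∧ r b x}) ≤ e c :=
    calc sInf (e '' {x | ∃ b, r a b ∧ r b x})
        ≤ diamondClosed e r (diamond e r a) := sInf_rel_comp_le_diamondClosed_diamond hc WO DD a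
      _ ≤ diamond e r a := h a
      _ ≤ e c := sInf_le ⟨c, hac, rfl⟩
  obtain ⟨x, ⟨b, hab, hbx⟩, hxc⟩ :=
    hc.exists_le_of_sInf_le (directedOn_ge_setOf_rel_comp SI DD a) hle
  exact ⟨b, hab, WO b x c hbx hxc⟩

end ProtoSubordination

open ProtoSubordination in
theorem stmt_11_general {A D : Type*} [PartialOrder A] [CompleteLattice D]
    (e : A → D)
    (compact : ∀ F I : Set A, DirectedOn (· ≥ ·) F → DirectedOn (· ≤ ·) I →
      sInf (e '' F) ≤ sSup (e '' I) → ∃ a ∈ F, ∃ b ∈ I, a ≤ b)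
    (r : A → A → Prop)
    (SI : ∀ a b x : A, a ≤ b → r b x → r a x)
    (WO : ∀ b x y : A, r b x → x ≤ y → r b y)
    (DD : ∀ a x₁ x₂ : A, r a x₁ → r a x₂ → ∃ x, r a x ∧ x ≤ x₁ ∧ x ≤ x₂) :
    (∀ a : A, sInf {u : D | ∃ b : A, sInf (e '' {x | r a x}) ≤ e b ∧ u = sInf (e '' {x | r b x})}
        ≤ sInf (e '' {x | r a x})) ↔
      (∀ a c : A, r a c → ∃ b, r a b ∧ r b c) :=
  ⟨fun h _ _ hac => dense_of_diamondClosed_diamond_le compact SI WO DD h hac,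
    diamondClosed_diamond_le_of_dense⟩

/-- Under (SI), (WO), (DD): `Diamond (Diamond a) ≤ Diamond a` for all `a` iff
the density condition (D) holds: `a ≺ c` implies `a ≺ b` and `b ≺ c` for some `b`. -/
theorem stmt_11 {A D : Type*} [PartialOrder A] [CompleteLattice D]
    (e : A → D) (he : ∀ a b : A, e a ≤ e b ↔ a ≤ b)
    (compact : ∀ F I : Set A, DirectedOn (· ≥ ·) F → DirectedOn (· ≤ ·) I →
      sInf (e '' F) ≤ sSup (e '' I) → ∃ a ∈ F, ∃ b ∈ I, a ≤ b)
    (r : A → A → Prop)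
    (SI : ∀ a b x : A, a ≤ b → r b x → r a x)
    (WO : ∀ b x y : A, r b x → x ≤ y → r b y)
    (DD : ∀ a x₁ x₂ : A, r a x₁ → r a x₂ → ∃ x, r a x ∧ x ≤ x₁ ∧ x ≤ x₂) :
    (∀ a : A, sInf {u : D | ∃ b : A, sInf (e '' {x | r a x}) ≤ e b ∧ u = sInf (e '' {x | r b x})}
        ≤ sInf (e '' {x | r a x})) ↔
      (∀ a c : A, r a c → ∃ b, r a b ∧ r b c) :=
  stmt_11_general e compact r SI WO DD
end

section
/- Let (A, ≺) be a proto-subordination algebra where A is a distributive lattice, satisfying (WO): b ≺ x ≤ y implies b ≺ y, and (OR): a ≺ x and b ≺ x imply a ∨ b ≺ x. Then Diamond(a ∨ b) ≤ Diamond a ∨ Diamond b holds in the canonical extension A^δ, where Diamond c := ⋀ ≺[c] and A^δ is completely distributive. -/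
theorem rel_sup_sup {A : Type*} [Lattice A] {r : A → A → Prop}
    (WO : ∀ b x y : A, r b x → x ≤ y → r b y)
    (OR : ∀ a b x : A, r a x → r b x → r (a ⊔ b) x) {a b x y : A}
    (hx : r a x) (hy : r b y) : r (a ⊔ b) (x ⊔ y) :=
  OR a b _ (WO a x _ hx le_sup_left) (WO b y _ hy le_sup_right)

theorem stmt_14_general {A D : Type*} [DistribLattice A] [CompleteLattice D]
    (e : A → D)
    (hjoin : ∀ a b : A, e (a ⊔ b) = e a ⊔ e b)
    (hdist : ∀ S T : Set D, sInf S ⊔ sInf T = sInf {x | ∃ s ∈ S, ∃ t ∈ T, x = s ⊔ t})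
    (r : A → A → Prop)
    (WO : ∀ b x y : A, r b x → x ≤ y → r b y)
    (OR : ∀ a b x : A, r a x → r b x → r (a ⊔ b) x) :
    ∀ a b : A,
      sInf (e '' {x | r (a ⊔ b) x}) ≤ sInf (e '' {x | r a x}) ⊔ sInf (e '' {x | r b x}) := by
  intro a b
  rw [hdist]
  refine le_sInf ?_
  rintro _ ⟨_, ⟨x, hx, rfl⟩, _, ⟨y, hy, rfl⟩, rfl⟩
  rw [← hjoin]
  exact sInf_le ⟨x ⊔ y, rel_sup_sup WO OR hx hy, rfl⟩

/-- For a distributive-lattice-based proto-subordination algebra satisfying (WO) and (OR),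
`Diamond (a ⊔ b) ≤ Diamond a ⊔ Diamond b` in the (completely distributive) canonical
extension. -/
theorem stmt_14 {A D : Type*} [DistribLattice A] [CompleteLattice D]
    (e : A → D) (he : ∀ a b : A, e a ≤ e b ↔ a ≤ b)
    (hjoin : ∀ a b : A, e (a ⊔ b) = e a ⊔ e b)
    (hdist : ∀ S T : Set D, sInf S ⊔ sInf T = sInf {x | ∃ s ∈ S, ∃ t ∈ T, x = s ⊔ t})
    (r : A → A → Prop)
    (WO : ∀ b x y : A, r b x → x ≤ y → r b y)
    (OR : ∀ a b x : A, r a x → r b x → r (a ⊔ b) x) :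
    ∀ a b : A,
      sInf (e '' {x | r (a ⊔ b) x}) ≤ sInf (e '' {x | r a x}) ⊔ sInf (e '' {x | r b x}) :=
  stmt_14_general e hjoin hdist r WO OR
end

section
/- Let (A, ≺) be a subordination lattice: A a bounded distributive lattice and ≺ satisfying (SI), (WO), (AND), (OR), (⊥): ⊥ ≺ ⊥, and (⊤): ⊤ ≺ ⊤. For prime filters P, Q of A, the following are equivalent: (1) ≺[P] := {x | ∃a ∈ P, a ≺ x} ⊆ Q; (2) ⋀Q ≤ ⋀≺[P] in the canonical extension A^δ. -/
/-!
For a filter `Q` and any set `S`, `S ⊆ Q` gives `⋀Q ≤ ⋀S` by antitonicity of `sInf`; conversely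
`⋀Q ≤ ⋀S ≤ x` for `x ∈ S` yields, by compactness applied to `Q` and `{x}`, some `a ∈ Q` with
`a ≤ x`, so `x ∈ Q`.
-/

/-- A prime filter of a bounded lattice. -/
def IsPrimeFilter {A : Type*} [Lattice A] (P : Set A) : Prop :=
  P.Nonempty ∧ (∀ a b : A, a ∈ P → a ≤ b → b ∈ P) ∧
  (∀ a b : A, a ∈ P → b ∈ P → a ⊓ b ∈ P) ∧ P ≠ Set.univ ∧
  (∀ a b : A, a ⊔ b ∈ P → a ∈ P ∨ b ∈ P)

theorem IsPrimeFilter.directedOn_ge {A : Type*} [Lattice A] {P : Set A} (hP : IsPrimeFilter P) :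
    DirectedOn (· ≥ ·) P :=
  fun a ha b hb => ⟨a ⊓ b, hP.2.2.1 a b ha hb, inf_le_left, inf_le_right⟩

section Compactness

variable {A D : Type*} [Lattice A] [CompleteLattice D] {e : A → D}
  (compact : ∀ F I : Set A, DirectedOn (· ≥ ·) F → DirectedOn (· ≤ ·) I →
    sInf (e '' F) ≤ sSup (e '' I) → ∃ a ∈ F, ∃ b ∈ I, a ≤ b)
  {Q : Set A} (hQdir : DirectedOn (· ≥ ·) Q) (hQup : ∀ a b : A, a ∈ Q → a ≤ b → b ∈ Q)
include compact hQdir hQup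

theorem mem_of_sInf_image_le {x : A} (h : sInf (e '' Q) ≤ e x) : x ∈ Q := by
  have hx : DirectedOn (· ≤ ·) ({x} : Set A) := directedOn_singleton x
  obtain ⟨a, ha, b, rfl, hab⟩ := compact Q {x} hQdir hx (by simpa using h)
  exact hQup a b ha hab

theorem subset_iff_sInf_image_le (S : Set A) : S ⊆ Q ↔ sInf (e '' Q) ≤ sInf (e '' S) :=
  ⟨fun hS => sInf_le_sInf (Set.image_mono hS), fun h _ hx =>
    mem_of_sInf_image_le compact hQdir hQup (h.trans (sInf_le (Set.mem_image_of_mem e hx)))⟩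

end Compactness

theorem stmt_17_general {A D : Type*} [DistribLattice A] [BoundedOrder A] [CompleteLattice D]
    (e : A → D)
    (compact : ∀ F I : Set A, DirectedOn (· ≥ ·) F → DirectedOn (· ≤ ·) I →
      sInf (e '' F) ≤ sSup (e '' I) → ∃ a ∈ F, ∃ b ∈ I, a ≤ b)
    (r : A → A → Prop)
    (P Q : Set A) (hQ : IsPrimeFilter Q) :
    {x : A | ∃ a ∈ P, r a x} ⊆ Q ↔
      sInf (e '' Q) ≤ sInf (e '' {x : A | ∃ a ∈ P, r a x}) :=
  subset_iff_sInf_image_le compact hQ.directedOn_ge hQ.2.1 _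

/-- For a subordination lattice and prime filters `P`, `Q`:
`≺[P] ⊆ Q` iff `⨅ Q ≤ ⨅ ≺[P]` in the canonical extension. -/
theorem stmt_17 {A D : Type*} [DistribLattice A] [BoundedOrder A] [CompleteLattice D]
    (e : A → D) (he : ∀ a b : A, e a ≤ e b ↔ a ≤ b)
    (compact : ∀ F I : Set A, DirectedOn (· ≥ ·) F → DirectedOn (· ≤ ·) I →
      sInf (e '' F) ≤ sSup (e '' I) → ∃ a ∈ F, ∃ b ∈ I, a ≤ b)
    (r : A → A → Prop)
    (SI : ∀ a b x : A, a ≤ b → r b x → r a x)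
    (WO : ∀ b x y : A, r b x → x ≤ y → r b y)
    (AND : ∀ a x y : A, r a x → r a y → r a (x ⊓ y))
    (OR : ∀ a b x : A, r a x → r b x → r (a ⊔ b) x)
    (hbot : r ⊥ ⊥) (htop : r ⊤ ⊤)
    (P Q : Set A) (hP : IsPrimeFilter P) (hQ : IsPrimeFilter Q) :
    {x : A | ∃ a ∈ P, r a x} ⊆ Q ↔
      sInf (e '' Q) ≤ sInf (e '' {x : A | ∃ a ∈ P, r a x}) :=
  stmt_17_general e compact r P Q hQ
end

section
/- Let (A, ≺) be a proto-subordination algebra (A a poset) satisfying (SI), (WO), (DD), and (UD), and suppose f, f' : A → A^δ take values in closed elements of A^δ with f(a) ≤ f'(a) for all a ∈ A and f(b) < f'(b) for some b ∈ A. Define ≺_f by a ≺_f c iff f(a) ≤ c, and similarly ≺_{f'}. Then ≺_{f'} ⊊ ≺_f (strict inclusion). -/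
/-!
Since `f ≤ f'`, every `f'`-subordination is an `f`-subordination. If conversely every
`c ∈ A` above the closed element `f b` were also above `f' b`, then by compactness `f' b`
would lie below every open element above `f b`, hence below `f b` itself by density,
contradicting `f b < f' b`.
-/

section CanonicalExtension

variable {A D : Type*} [Preorder A] [CompleteLattice D] {e : A → D}

theorem exists_le_image_of_sInf_le_sSup (he : Monotone e)
    (compact : ∀ F I : Set A, DirectedOn (· ≥ ·) F → DirectedOn (· ≤ ·) I →
      sInf (e '' F) ≤ sSup (e '' I) → ∃ a ∈ F, ∃ b ∈ I, a ≤ b)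
    {F I : Set A} (hF : DirectedOn (· ≥ ·) F) (hI : DirectedOn (· ≤ ·) I)
    (hFI : sInf (e '' F) ≤ sSup (e '' I)) : ∃ c ∈ I, sInf (e '' F) ≤ e c := by
  obtain ⟨a, haF, c, hcI, hac⟩ := compact F I hF hI hFI
  exact ⟨c, hcI, (sInf_le (Set.mem_image_of_mem e haF)).trans (he hac)⟩

theorem le_sInf_image_of_forall_le_image (he : Monotone e)
    (compact : ∀ F I : Set A, DirectedOn (· ≥ ·) F → DirectedOn (· ≤ ·) I →
      sInf (e '' F) ≤ sSup (e '' I) → ∃ a ∈ F, ∃ b ∈ I, a ≤ b)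
    (dense : ∀ u : D,
      u = sInf {o | (∃ I : Set A, DirectedOn (· ≤ ·) I ∧ o = sSup (e '' I)) ∧ u ≤ o})
    {F : Set A} (hF : DirectedOn (· ≥ ·) F) {u : D}
    (hu : ∀ c : A, sInf (e '' F) ≤ e c → u ≤ e c) : u ≤ sInf (e '' F) := by
  rw [dense (sInf (e '' F))]
  refine le_sInf ?_
  rintro _ ⟨⟨I, hI, rfl⟩, hFI⟩
  obtain ⟨c, hcI, hFc⟩ := exists_le_image_of_sInf_le_sSup he compact hF hI hFI
  exact (hu c hFc).trans (le_sSup (Set.mem_image_of_mem e hcI))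

end CanonicalExtension

theorem stmt_19_general {A D : Type*} [PartialOrder A] [CompleteLattice D]
    (e : A → D) (he : ∀ a b : A, e a ≤ e b ↔ a ≤ b)
    (compact : ∀ F I : Set A, DirectedOn (· ≥ ·) F → DirectedOn (· ≤ ·) I →
      sInf (e '' F) ≤ sSup (e '' I) → ∃ a ∈ F, ∃ b ∈ I, a ≤ b)
    (dense : ∀ u : D,
      u = sInf {o | (∃ I : Set A, DirectedOn (· ≤ ·) I ∧ o = sSup (e '' I)) ∧ u ≤ o})
    (f f' : A → D)
    (hf : ∀ a : A, ∃ F : Set A, DirectedOn (· ≥ ·) F ∧ f a = sInf (e '' F))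
    (hle : ∀ a : A, f a ≤ f' a) (b : A) (hlt : f b < f' b) :
    {p : A × A | f' p.1 ≤ e p.2} ⊂ {p : A × A | f p.1 ≤ e p.2} := by
  refine ⟨fun p hp => (hle p.1).trans hp, fun hsub => ?_⟩
  obtain ⟨F, hF, hfb⟩ := hf b
  have he_mono : Monotone e := fun a c hac => (he a c).2 hac
  have hf'b : f' b ≤ f b := by
    rw [hfb]
    refine le_sInf_image_of_forall_le_image he_mono compact dense hF fun c hc => ?_
    exact hsub (show f (b, c).1 ≤ e (b, c).2 from hfb ▸ hc)
  exact hlt.not_ge hf'b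

/-- If `f, f' : A → A^δ` take closed values, `f ≤ f'` pointwise and `f b < f' b` for
some `b`, then the induced proto-subordination relation of `f'` is strictly contained
in that of `f`. -/
theorem stmt_19 {A D : Type*} [PartialOrder A] [CompleteLattice D]
    (e : A → D) (he : ∀ a b : A, e a ≤ e b ↔ a ≤ b)
    (compact : ∀ F I : Set A, DirectedOn (· ≥ ·) F → DirectedOn (· ≤ ·) I →
      sInf (e '' F) ≤ sSup (e '' I) → ∃ a ∈ F, ∃ b ∈ I, a ≤ b)
    (dense : ∀ u : D,
      u = sInf {o | (∃ I : Set A, DirectedOn (· ≤ ·) I ∧ o = sSup (e '' I)) ∧ u ≤ o})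
    (r : A → A → Prop)
    (SI : ∀ a b x : A, a ≤ b → r b x → r a x)
    (WO : ∀ b x y : A, r b x → x ≤ y → r b y)
    (DD : ∀ a x₁ x₂ : A, r a x₁ → r a x₂ → ∃ x, r a x ∧ x ≤ x₁ ∧ x ≤ x₂)
    (UD : ∀ a₁ a₂ x : A, r a₁ x → r a₂ x → ∃ a, r a x ∧ a₁ ≤ a ∧ a₂ ≤ a)
    (f f' : A → D)
    (hf : ∀ a : A, ∃ F : Set A, DirectedOn (· ≥ ·) F ∧ f a = sInf (e '' F))
    (hf' : ∀ a : A, ∃ F : Set A, DirectedOn (· ≥ ·) F ∧ f' a = sInf (e '' F))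
    (hle : ∀ a : A, f a ≤ f' a) (b : A) (hlt : f b < f' b) :
    {p : A × A | f' p.1 ≤ e p.2} ⊂ {p : A × A | f p.1 ≤ e p.2} :=
  stmt_19_general e he compact dense f f' hf hle b hlt
end
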